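/- Let Φ be an M × LM matrix partitioned into L blocks Φ_k = diag(p_k)·H where H is the ±1 Walsh-Hadamard matrix of order M = 2^m and p_k is the ±1 modulation of the quadratic form Q_{π_k}. If r_min is the minimum over all pairs k₁ ≠ k₂ of rank_2(B_{k₁,k₂}), where B_{k₁,k₂} = (Q_{k₁}+Q_{k₂}) + (Q_{k₁}+Q_{k₂})ᵀ, then the coherence of the column-normalized Φ equals 1/√(2^{r_min}). -/

import Mathlib

/-!
Write `χ a = (-1) ^ a` on `ZMod 2` and `S_Q(w) = ∑ₓ χ (q_Q x + w ⬝ᵥ x)` for the quadratic form `q_Q`.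
The inner product of the columns `(Q₁, v₁)` and `(Q₂, v₂)` is `S_{Q₁+Q₂}(v₁ + v₂) / 2 ^ n`.
Squaring `S_Q(w)` and substituting `y = x + d`, polarization leaves `χ (x ⬝ᵥ B d)` with
`B = Q + Qᵀ` as the only dependence on `x`, so summing over `x` kills every `d ∉ ker B` and
`S_Q(w)² = 2 ^ n ∑_{d ∈ ker B} χ (q_Q d + w ⬝ᵥ d)`, of absolute value at most
`2 ^ n · 2 ^ (n - rank B)`. Since `q_Q` is linear on `ker B`, some `w` agrees with it there, and
then the bound is attained. Inside a block `Q₁ + Q₂ = 0`, and distinct columns are distinct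
Walsh functions, hence orthogonal.
-/

open Matrix

/-- The quadratic form `x ↦ x Q xᵀ` associated to a quadratic matrix `Q` over `Z_2`. -/
def qmf {n : ℕ} (Q : Matrix (Fin n) (Fin n) (ZMod 2)) (x : Fin n → ZMod 2) : ZMod 2 :=
  ∑ i, ∑ j, x i * Q i j * x j

/-- The normalized column of the Golay spreading matrix with quadratic matrix `Q`
and linear label `v`. -/
noncomputable def gcol {n : ℕ} (Q : Matrix (Fin n) (Fin n) (ZMod 2)) (v : Fin n → ZMod 2)
    (x : Fin n → ZMod 2) : ℝ :=
  (1 / Real.sqrt (2 ^ n)) * (-1 : ℝ) ^ (qmf Q x + ∑ r, v r * x r).val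

open Finset

section

variable {n : ℕ}

noncomputable def zmodSign (a : ZMod 2) : ℝ := (-1) ^ a.val

@[simp] lemma zmodSign_zero : zmodSign 0 = 1 := by simp [zmodSign]

@[simp] lemma zmodSign_one : zmodSign 1 = -1 := by simp [zmodSign, ZMod.val_one]

lemma zmodSign_add (a b : ZMod 2) : zmodSign (a + b) = zmodSign a * zmodSign b := by
  rw [zmodSign, ZMod.val_add, ← neg_one_pow_eq_pow_mod_two, pow_add]; rfl

lemma abs_zmodSign (a : ZMod 2) : |zmodSign a| = 1 := by simp [zmodSign]

lemma sum_zmodSign_dotProduct (u : Fin n → ZMod 2) :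
    ∑ x : Fin n → ZMod 2, zmodSign (u ⬝ᵥ x) = if u = 0 then 2 ^ n else 0 := by
  split_ifs with hu
  · simp [hu, card_univ]
  obtain ⟨i, hi⟩ := Function.ne_iff.mp hu
  have hui : u i = 1 := (by decide : ∀ a : ZMod 2, a ≠ 0 → a = 1) _ hi
  have hflip : ∀ x, zmodSign (u ⬝ᵥ (x + Pi.single i 1)) = -zmodSign (u ⬝ᵥ x) := by
    intro x
    rw [dotProduct_add, dotProduct_single, mul_one, hui, zmodSign_add, zmodSign_one, mul_neg_one]
  have := Equiv.sum_comp (Equiv.addRight (Pi.single i 1)) fun x => zmodSign (u ⬝ᵥ x)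
  simp only [Equiv.coe_addRight, hflip, sum_neg_distrib] at this
  linarith

lemma qmf_eq_dotProduct_mulVec (Q : Matrix (Fin n) (Fin n) (ZMod 2)) (x : Fin n → ZMod 2) :
    qmf Q x = x ⬝ᵥ Q *ᵥ x := by
  simp [qmf, dotProduct, mulVec, mul_sum, mul_assoc]

lemma qmf_add_left (Q₁ Q₂ : Matrix (Fin n) (Fin n) (ZMod 2)) (x : Fin n → ZMod 2) :
    qmf (Q₁ + Q₂) x = qmf Q₁ x + qmf Q₂ x := by
  simp only [qmf_eq_dotProduct_mulVec, add_mulVec, dotProduct_add]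

lemma qmf_add (Q : Matrix (Fin n) (Fin n) (ZMod 2)) (x d : Fin n → ZMod 2) :
    qmf Q (x + d) = qmf Q x + qmf Q d + x ⬝ᵥ (Q + Qᵀ) *ᵥ d := by
  have : x ⬝ᵥ Qᵀ *ᵥ d = d ⬝ᵥ Q *ᵥ x := by
    rw [mulVec_transpose, dotProduct_comm, ← dotProduct_mulVec]
  simp only [qmf_eq_dotProduct_mulVec, add_mulVec, mulVec_add, dotProduct_add, add_dotProduct, this]
  ring

noncomputable def walshSum (Q : Matrix (Fin n) (Fin n) (ZMod 2)) (w : Fin n → ZMod 2) : ℝ :=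
  ∑ x : Fin n → ZMod 2, zmodSign (qmf Q x + w ⬝ᵥ x)

lemma walshSum_sq (Q : Matrix (Fin n) (Fin n) (ZMod 2)) (w : Fin n → ZMod 2) :
    walshSum Q w ^ 2 =
      2 ^ n * ∑ d with (Q + Qᵀ) *ᵥ d = 0, zmodSign (qmf Q d + w ⬝ᵥ d) := by
  have hpolar : ∀ x d, zmodSign (qmf Q x + w ⬝ᵥ x) * zmodSign (qmf Q (x + d) + w ⬝ᵥ (x + d)) =
      zmodSign (qmf Q d + w ⬝ᵥ d) * zmodSign (((Q + Qᵀ) *ᵥ d) ⬝ᵥ x) := by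
    intro x d
    have h2 : (2 : ZMod 2) = 0 := rfl
    rw [← zmodSign_add, ← zmodSign_add, qmf_add, dotProduct_add, dotProduct_comm x]
    congr 1
    linear_combination (qmf Q x + w ⬝ᵥ x) * h2
  calc walshSum Q w ^ 2
      = ∑ x, ∑ d, zmodSign (qmf Q x + w ⬝ᵥ x) * zmodSign (qmf Q (x + d) + w ⬝ᵥ (x + d)) := by
        rw [walshSum, sq, sum_mul_sum]
        refine sum_congr rfl fun x _ => ?_
        exact (Equiv.sum_comp (Equiv.addLeft x) _).symm
    _ = ∑ d, zmodSign (qmf Q d + w ⬝ᵥ d) * ∑ x, zmodSign (((Q + Qᵀ) *ᵥ d) ⬝ᵥ x) := by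
        simp only [hpolar, mul_sum]
        exact sum_comm
    _ = 2 ^ n * ∑ d with (Q + Qᵀ) *ᵥ d = 0, zmodSign (qmf Q d + w ⬝ᵥ d) := by
        simp only [sum_zmodSign_dotProduct, sum_filter, mul_sum, mul_ite, mul_zero]
        exact sum_congr rfl fun d _ => by split_ifs <;> ring

lemma card_filter_mulVec_eq_zero (B : Matrix (Fin n) (Fin n) (ZMod 2)) :
    #{d : Fin n → ZMod 2 | B *ᵥ d = 0} = 2 ^ (n - B.rank) := by
  have hcard : #{d : Fin n → ZMod 2 | B *ᵥ d = 0} = Nat.card (LinearMap.ker B.mulVecLin) := by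
    rw [← Fintype.card_subtype, ← Nat.card_eq_fintype_card]
    rfl
  have hrank := LinearMap.finrank_range_add_finrank_ker B.mulVecLin
  rw [Module.finrank_fintype_fun_eq_card, Fintype.card_fin] at hrank
  rw [hcard, Module.natCard_eq_pow_finrank (K := ZMod 2), Nat.card_zmod, Matrix.rank]
  congr 1
  omega

lemma walshSum_sq_le (Q : Matrix (Fin n) (Fin n) (ZMod 2)) (w : Fin n → ZMod 2) :
    walshSum Q w ^ 2 ≤ 2 ^ n * 2 ^ (n - (Q + Qᵀ).rank) := by
  rw [walshSum_sq]
  gcongr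
  calc ∑ d with (Q + Qᵀ) *ᵥ d = 0, zmodSign (qmf Q d + w ⬝ᵥ d)
      ≤ ∑ d with (Q + Qᵀ) *ᵥ d = 0, (1 : ℝ) :=
        sum_le_sum fun d _ => (le_abs_self _).trans (abs_zmodSign _).le
    _ = 2 ^ (n - (Q + Qᵀ).rank) := by
        rw [sum_const, nsmul_one, card_filter_mulVec_eq_zero]
        norm_num

/-- Polarization makes `qmf Q` additive on the radical `ker (Q + Qᵀ)`; choosing `w` to agree with
it there makes every term of `walshSum_sq` equal to `1`. -/
lemma exists_walshSum_sq_eq (Q : Matrix (Fin n) (Fin n) (ZMod 2)) :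
    ∃ w, walshSum Q w ^ 2 = 2 ^ n * 2 ^ (n - (Q + Qᵀ).rank) := by
  let qmfRadical : LinearMap.ker (Q + Qᵀ).mulVecLin →+ ZMod 2 :=
    AddMonoidHom.mk' (fun d => qmf Q d) fun d d' => by
      have hd' : (Q + Qᵀ) *ᵥ d' = 0 := d'.2
      simp only [Submodule.coe_add, qmf_add, hd', dotProduct_zero, add_zero]
  obtain ⟨g, hg⟩ := LinearMap.exists_extend (qmfRadical.toZModLinearMap 2)
  set w := (dotProductEquiv (ZMod 2) (Fin n)).symm g
  have hw : ∀ d, (Q + Qᵀ) *ᵥ d = 0 → w ⬝ᵥ d = qmf Q d := fun d hd =>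
    (LinearMap.congr_fun ((dotProductEquiv _ _).apply_symm_apply g) d).trans
      (LinearMap.congr_fun hg ⟨d, hd⟩)
  refine ⟨w, ?_⟩
  rw [walshSum_sq, sum_congr rfl fun d hd => by
    rw [hw d (mem_filter.1 hd).2, CharTwo.add_self_eq_zero, zmodSign_zero]]
  rw [sum_const, nsmul_one, card_filter_mulVec_eq_zero]
  norm_num

lemma sum_gcol_mul_gcol (Q₁ Q₂ : Matrix (Fin n) (Fin n) (ZMod 2)) (v₁ v₂ : Fin n → ZMod 2) :
    ∑ x, gcol Q₁ v₁ x * gcol Q₂ v₂ x = walshSum (Q₁ + Q₂) (v₁ + v₂) / 2 ^ n := by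
  rw [walshSum, sum_div]
  refine sum_congr rfl fun x _ => ?_
  rw [qmf_add_left, add_dotProduct, add_add_add_comm, zmodSign_add]
  simp only [gcol, zmodSign, dotProduct]
  field_simp
  exact (Real.sq_sqrt (by positivity)).symm

lemma walshSum_add_self (Q : Matrix (Fin n) (Fin n) (ZMod 2)) {w : Fin n → ZMod 2}
    (hw : w ≠ 0) : walshSum (Q + Q) w = 0 := by
  simp only [walshSum, qmf_add_left, CharTwo.add_self_eq_zero, zero_add, sum_zmodSign_dotProduct,
    if_neg hw]

lemma one_div_sqrt_two_pow_eq {r : ℕ} (h : r ≤ n) :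
    1 / Real.sqrt (2 ^ r) = Real.sqrt (2 ^ n * 2 ^ (n - r)) / 2 ^ n := by
  have hn : (2 : ℝ) ^ n = 2 ^ (n - r) * 2 ^ r := by rw [← pow_add, Nat.sub_add_cancel h]
  rw [hn, show (2 : ℝ) ^ (n - r) * 2 ^ r * 2 ^ (n - r) = (2 ^ (n - r)) ^ 2 * 2 ^ r by ring,
    Real.sqrt_mul (by positivity), Real.sqrt_sq (by positivity)]
  field_simp
  exact (Real.sq_sqrt (by positivity)).symm

lemma abs_sum_gcol_mul_gcol_le (Q₁ Q₂ : Matrix (Fin n) (Fin n) (ZMod 2))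
    (v₁ v₂ : Fin n → ZMod 2) :
    |∑ x, gcol Q₁ v₁ x * gcol Q₂ v₂ x| ≤
      1 / Real.sqrt (2 ^ ((Q₁ + Q₂) + (Q₁ + Q₂)ᵀ).rank) := by
  rw [sum_gcol_mul_gcol, abs_div, ← Real.sqrt_sq_eq_abs, abs_of_pos (by positivity),
    one_div_sqrt_two_pow_eq (rank_le_width _)]
  gcongr
  exact walshSum_sq_le _ _

lemma exists_abs_sum_gcol_mul_gcol_eq (Q₁ Q₂ : Matrix (Fin n) (Fin n) (ZMod 2)) :
    ∃ v, |∑ x, gcol Q₁ v x * gcol Q₂ 0 x| =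
      1 / Real.sqrt (2 ^ ((Q₁ + Q₂) + (Q₁ + Q₂)ᵀ).rank) := by
  obtain ⟨w, hw⟩ := exists_walshSum_sq_eq (Q₁ + Q₂)
  refine ⟨w, ?_⟩
  rw [sum_gcol_mul_gcol, add_zero, abs_div, ← Real.sqrt_sq_eq_abs, hw, abs_of_pos (by positivity),
    one_div_sqrt_two_pow_eq (rank_le_width _)]

end

theorem stmt11_general (m L : ℕ)
    (Q : Fin L → Matrix (Fin (m + 1)) (Fin (m + 1)) (ZMod 2))
    (rmin : ℕ)
    (hmin : ∀ k₁ k₂, k₁ ≠ k₂ → rmin ≤ ((Q k₁ + Q k₂) + (Q k₁ + Q k₂)ᵀ).rank)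
    (hattain : ∃ k₁ k₂, k₁ ≠ k₂ ∧ ((Q k₁ + Q k₂) + (Q k₁ + Q k₂)ᵀ).rank = rmin) :
    (∀ k₁ k₂ (v₁ v₂ : Fin (m + 1) → ZMod 2), (k₁, v₁) ≠ (k₂, v₂) →
        |∑ x : Fin (m + 1) → ZMod 2, gcol (Q k₁) v₁ x * gcol (Q k₂) v₂ x|
          ≤ 1 / Real.sqrt (2 ^ rmin))
      ∧ (∃ k₁ k₂, ∃ v₁ v₂ : Fin (m + 1) → ZMod 2, (k₁, v₁) ≠ (k₂, v₂) ∧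
        |∑ x : Fin (m + 1) → ZMod 2, gcol (Q k₁) v₁ x * gcol (Q k₂) v₂ x|
          = 1 / Real.sqrt (2 ^ rmin)) := by
  constructor
  · intro k₁ k₂ v₁ v₂ hne
    by_cases hk : k₁ = k₂
    · subst hk
      have hv : v₁ + v₂ ≠ 0 := fun h => hne (by rw [CharTwo.add_eq_zero.mp h])
      rw [sum_gcol_mul_gcol, walshSum_add_self _ hv, zero_div, abs_zero]
      positivity
    · refine (abs_sum_gcol_mul_gcol_le _ _ _ _).trans ?_
      gcongr
      · norm_num
      · exact hmin k₁ k₂ hk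
  · obtain ⟨k₁, k₂, hk, hrank⟩ := hattain
    obtain ⟨v, hv⟩ := exists_abs_sum_gcol_mul_gcol_eq (Q k₁) (Q k₂)
    exact ⟨k₁, k₂, v, 0, fun h => hk (congrArg Prod.fst h), hrank ▸ hv⟩

/-- The coherence of the Golay spreading matrix `Φ` with blocks defined by the
quadratic forms of permutations `π₁,...,π_L` equals `1/√(2^{r_min})`, where `r_min`
is the minimum rank over `Z_2` of the symplectic matrices `B_{k₁,k₂}` of pairs of
blocks. (Coherence is expressed as: all inner products of distinct columns are
bounded by `1/√(2^{r_min})` in absolute value, and the bound is attained.) -/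
theorem stmt11 (m L : ℕ) (hL : 2 ≤ L)
    (π : Fin L → Equiv.Perm (Fin (m + 1)))
    (Q : Fin L → Matrix (Fin (m + 1)) (Fin (m + 1)) (ZMod 2))
    (hupper : ∀ k, ∀ i j : Fin (m + 1), (j : ℕ) < (i : ℕ) → Q k i j = 0)
    (hform : ∀ k x, qmf (Q k) x = ∑ r : Fin m, x ((π k) r.castSucc) * x ((π k) r.succ))
    (rmin : ℕ)
    (hmin : ∀ k₁ k₂, k₁ ≠ k₂ → rmin ≤ ((Q k₁ + Q k₂) + (Q k₁ + Q k₂)ᵀ).rank)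
    (hattain : ∃ k₁ k₂, k₁ ≠ k₂ ∧ ((Q k₁ + Q k₂) + (Q k₁ + Q k₂)ᵀ).rank = rmin) :
    (∀ k₁ k₂ (v₁ v₂ : Fin (m + 1) → ZMod 2), (k₁, v₁) ≠ (k₂, v₂) →
        |∑ x : Fin (m + 1) → ZMod 2, gcol (Q k₁) v₁ x * gcol (Q k₂) v₂ x|
          ≤ 1 / Real.sqrt (2 ^ rmin))
      ∧ (∃ k₁ k₂, ∃ v₁ v₂ : Fin (m + 1) → ZMod 2, (k₁, v₁) ≠ (k₂, v₂) ∧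
        |∑ x : Fin (m + 1) → ZMod 2, gcol (Q k₁) v₁ x * gcol (Q k₂) v₂ x|
          = 1 / Real.sqrt (2 ^ rmin)) :=
  stmt11_general m L Q rmin hmin hattain
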